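/- Let q ≥ 4 and k ≥ 2 be integers and d ≥ 3q^k an integer. Let x_0 be the unique solution in (1, ∞) of g(x_0) = q^k − q, where g(x) := (x^d − 1)^d / ((x^{d+1} − 1)^{d−1}·(x − 1)), and let x* be the smallest root in (1, ∞) of h1(x) := ((x^{d+1} − 1)/(x^d − 1))^d·(q^k − q) − (x^d − 1)/(x − 1) + q − x^d. Then x_0 > x*, and for every x with 1 < x < x_0 the function y ↦ f1(x, y) is strictly decreasing on the interval (1, x]. -/
import Mathlib

open Finset

/-- `g(x) = (x^d − 1)^d / ((x^{d+1} − 1)^{d−1}·(x − 1))`. -/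
noncomputable def gfun (d : ℕ) (x : ℝ) : ℝ :=
  (x ^ d - 1) ^ d / ((x ^ (d + 1) - 1) ^ (d - 1) * (x - 1))

/-- `h1(x) = ((x^{d+1} − 1)/(x^d − 1))^d·(q^k − q) − (x^d − 1)/(x − 1) + q − x^d`. -/
noncomputable def h1 (q k d : ℕ) (x : ℝ) : ℝ :=
  ((x ^ (d + 1) - 1) / (x ^ d - 1)) ^ d * ((q : ℝ) ^ k - q)
    - (x ^ d - 1) / (x - 1) + (q : ℝ) - x ^ d

/-- `f1(x,y) = (x−1)·[(1 + x^d(y−1)/(x^d−1))^d·(q^k−q) + q − y^d] − y^d + 1`. -/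
noncomputable def f1 (q k d : ℕ) (x y : ℝ) : ℝ :=
  (x - 1) * ((1 + x ^ d * (y - 1) / (x ^ d - 1)) ^ d * ((q : ℝ) ^ k - q)
    + (q : ℝ) - y ^ d) - y ^ d + 1

lemma spos {x : ℝ} (hx : 1 < x) (n : ℕ) (hn : 1 ≤ n) : 0 < ∑ i ∈ range n, x^i := by
  apply Finset.sum_pos (fun i _ => by positivity)
  exact nonempty_range_iff.mpr (by omega)

lemma sum_gt {d : ℕ} (hd : 2 ≤ d) {t : ℝ} (ht : 1 < t) :
    (d:ℝ) * t^(d-1) < ∑ i ∈ range d, (t^2)^i := by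
  have ht0 : 0 < t := by linarith
  have key : ∑ i ∈ range d, 2*t^(d-1) < ∑ i ∈ range d, ((t^2)^i + (t^2)^(d-1-i)) := by
    apply Finset.sum_lt_sum
    · intro i hi
      have hle : i ≤ d - 1 := by simp at hi; omega
      have h1 : (t^2)^i = (t^i)^2 := by ring
      have h2 : (t^2)^(d-1-i) = (t^(d-1-i))^2 := by ring
      have h3 : t^i * t^(d-1-i) = t^(d-1) := by rw [← pow_add]; congr 1; omega
      nlinarith [sq_nonneg (t^i - t^(d-1-i))]
    · refine ⟨0, mem_range.mpr (by omega), ?_⟩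
      have h3 : (1:ℝ) < t^(d-1) := one_lt_pow₀ ht (by omega)
      have h2 : (t^2)^(d-1-0) = (t^(d-1))^2 := by rw [← pow_mul, ← pow_mul]; congr 1; omega
      simp only [pow_zero, h2]
      nlinarith
  have hrefl : ∑ i ∈ range d, (t^2)^(d-1-i) = ∑ i ∈ range d, (t^2)^i :=
    Finset.sum_range_reflect (fun i => (t^2)^i) d
  rw [Finset.sum_add_distrib, hrefl, Finset.sum_const, card_range] at key
  simp only [nsmul_eq_mul] at key
  linarith

lemma sq_gt {d : ℕ} (hd : 2 ≤ d) {x : ℝ} (hx : 1 < x) :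
    (d:ℝ)^2 * x^(d-1) < (∑ i ∈ range d, x^i)^2 := by
  have hx0 : 0 ≤ x := by linarith
  set t := Real.sqrt x with htdef
  have ht2 : t^2 = x := Real.sq_sqrt hx0
  have ht : 1 < t := by
    nlinarith [Real.sqrt_nonneg x, ht2]
  have h := sum_gt hd ht
  rw [ht2] at h
  have hpos : 0 < (d:ℝ) * t^(d-1) := by positivity
  have := mul_self_lt_mul_self (le_of_lt hpos) h
  have hx' : x^(d-1) = t^(d-1) * t^(d-1) := by
    rw [← ht2, ← pow_mul, ← pow_add]; ring_nf
  calc (d:ℝ)^2 * x^(d-1) = ((d:ℝ)*t^(d-1)) * ((d:ℝ)*t^(d-1)) := by rw [hx']; ring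
      _ < _ := by rw [sq]; exact this

lemma core {d : ℕ} (hd : 2 ≤ d) {x : ℝ} (hx : 1 < x) :
    (d:ℝ)^2 * x^(d-1) * (x^(d+1)-1) * (x-1)
      < (x^d-1) * (((d:ℝ)^2-1) * x^d * (x-1) + (x^(d+1)-1)) := by
  set s := ∑ i ∈ range d, x^i with hsdef
  set p := x^(d-1) with hpdef
  have hxd : x^d = x*p := by rw [hpdef, ← pow_succ']; congr 1; omega
  have hxd1 : x^(d+1) = x^2*p := by rw [hpdef, ← pow_add]; congr 1; omega
  have hs : (x-1)*s = x*p - 1 := by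
    rw [hsdef, mul_comm, geom_sum_mul, hxd]
  have hsq := sq_gt hd hx
  rw [← hsdef, ← hpdef] at hsq
  have key : (x^d-1) * (((d:ℝ)^2-1) * x^d * (x-1) + (x^(d+1)-1))
      - (d:ℝ)^2 * x^(d-1) * (x^(d+1)-1) * (x-1)
      = (x-1)^2 * (s^2 - (d:ℝ)^2*p) := by
    rw [hxd, hxd1, ← hpdef]
    linear_combination (-((x-1)*s + (x*p-1))) * hs
  have hpos : 0 < (x-1)^2 * (s^2 - (d:ℝ)^2*p) :=
    mul_pos (pow_pos (by linarith) 2) (by linarith)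
  linarith [key]

lemma pow_sub_one_pos {x : ℝ} (hx : 1 < x) {n : ℕ} (hn : 1 ≤ n) : 0 < x^n - 1 := by
  have := one_lt_pow₀ hx (by omega : n ≠ 0)
  linarith

lemma gfun_hasDeriv {d : ℕ} (hd : 2 ≤ d) {x : ℝ} (hx : 1 < x) :
    HasDerivAt (gfun d)
      (((d:ℝ) * (x^d-1)^(d-1) * ((d:ℝ) * x^(d-1)) * ((x^(d+1)-1)^(d-1) * (x-1))
        - (x^d-1)^d * (((d-1:ℕ):ℝ) * (x^(d+1)-1)^(d-1-1) * (((d+1:ℕ):ℝ) * x^(d+1-1)) * (x-1)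
            + (x^(d+1)-1)^(d-1) * 1))
        / ((x^(d+1)-1)^(d-1) * (x-1))^2) x := by
  have hD1 : 0 < x^(d+1) - 1 := pow_sub_one_pos hx (by omega)
  have hDne : (x^(d+1)-1)^(d-1) * (x-1) ≠ 0 :=
    ne_of_gt (mul_pos (pow_pos hD1 _) (by linarith))
  have hN : HasDerivAt (fun x : ℝ => (x^d - 1)^d)
      ((d:ℝ) * (x^d-1)^(d-1) * ((d:ℝ) * x^(d-1))) x := by
    have h1 : HasDerivAt (fun x : ℝ => x^d - 1) ((d:ℝ) * x^(d-1)) x :=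
      (hasDerivAt_pow d x).sub_const 1
    exact h1.pow d
  have hDa : HasDerivAt (fun x : ℝ => (x^(d+1) - 1)^(d-1))
      (((d-1:ℕ):ℝ) * (x^(d+1)-1)^(d-1-1) * (((d+1:ℕ):ℝ) * x^(d+1-1))) x := by
    have h1 : HasDerivAt (fun x : ℝ => x^(d+1) - 1) (((d+1:ℕ):ℝ) * x^(d+1-1)) x :=
      (hasDerivAt_pow (d+1) x).sub_const 1
    exact h1.pow (d-1)
  have hDb : HasDerivAt (fun x : ℝ => x - 1) (1:ℝ) x := (hasDerivAt_id x).sub_const 1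
  have hD : HasDerivAt (fun x : ℝ => (x^(d+1) - 1)^(d-1) * (x-1))
      (((d-1:ℕ):ℝ) * (x^(d+1)-1)^(d-1-1) * (((d+1:ℕ):ℝ) * x^(d+1-1)) * (x-1)
        + (x^(d+1)-1)^(d-1) * 1) x := hDa.mul hDb
  exact hN.div hD hDne

lemma gfun_anti {d : ℕ} (hd : 2 ≤ d) : StrictAntiOn (gfun d) (Set.Ioi (1:ℝ)) := by
  have hderiv : ∀ x ∈ interior (Set.Ioi (1:ℝ)), deriv (gfun d) x < 0 := by
    rw [interior_Ioi]
    intro x hx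
    have hx : 1 < x := hx
    have hD1 : 0 < x^(d+1) - 1 := pow_sub_one_pos hx (by omega)
    have hN1 : 0 < x^d - 1 := pow_sub_one_pos hx (by omega)
    have hx1 : 0 < x - 1 := by linarith
    have h := (gfun_hasDeriv hd hx).deriv
    rw [h]
    apply div_neg_of_neg_of_pos
    · -- numerator negative
      have hcore := core hd hx
      have hcast1 : ((d-1:ℕ):ℝ) = (d:ℝ) - 1 := by
        rw [Nat.cast_sub (by omega)]; norm_num
      have hcast2 : ((d+1:ℕ):ℝ) = (d:ℝ) + 1 := by push_cast; ring
      rw [hcast1, hcast2]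
      have e1 : (x^d-1)^d = (x^d-1)^(d-1) * (x^d-1) := by
        rw [← pow_succ]; congr 1; omega
      have e2 : (x^(d+1)-1)^(d-1) = (x^(d+1)-1)^(d-1-1) * (x^(d+1)-1) := by
        rw [← pow_succ]; congr 1; omega
      have e3 : x^(d+1-1) = x^d := by congr 1
      rw [e1, e2, e3]
      have hF : 0 < (x^d-1)^(d-1) * (x^(d+1)-1)^(d-1-1) := by positivity
      set F := (x^d-1)^(d-1) * (x^(d+1)-1)^(d-1-1) with hFdef
      have hmul : F * ((d:ℝ)^2*x^(d-1)*(x^(d+1)-1)*(x-1))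
          < F * ((x^d-1)*(((d:ℝ)^2-1)*x^d*(x-1)+(x^(d+1)-1))) :=
        mul_lt_mul_of_pos_left hcore hF
      nlinarith [hmul]
    · have : 0 < (x^(d+1)-1)^(d-1) * (x-1) := mul_pos (pow_pos hD1 _) (by linarith)
      positivity
  have hcont : ContinuousOn (gfun d) (Set.Ioi (1:ℝ)) :=
    fun x hx => ((gfun_hasDeriv hd hx).continuousAt).continuousWithinAt
  exact strictAntiOn_of_deriv_neg (convex_Ioi 1) hcont hderiv

/-- pointwise star inequality -/
lemma star {d : ℕ} (hd : 2 ≤ d) {x y T : ℝ} (hx : 1 < x) (hy : 1 < y) (hyx : y ≤ x)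
    (hT : 0 < T) (hgT : T < gfun d x) :
    (x-1)*T*x^d*(x^d*y-1)^(d-1) < x*y^(d-1)*(x^d-1)^d := by
  have hx1 : (0:ℝ) < x - 1 := by linarith
  have hA : 0 < x^d - 1 := pow_sub_one_pos hx (by omega)
  have hD1 : 0 < x^(d+1) - 1 := pow_sub_one_pos hx (by omega)
  have hC : 0 < x^d*y - 1 := by nlinarith
  have hg : T * ((x^(d+1)-1)^(d-1)*(x-1)) < (x^d-1)^d := by
    have hDpos : 0 < (x^(d+1)-1)^(d-1)*(x-1) := by positivity
    have := (lt_div_iff₀ hDpos).mp (by rw [← gfun]; exact hgT)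
    linarith [this]
  have hxy : x*(x^d*y-1) ≤ y*(x^(d+1)-1) := by
    have hps : x^(d+1) = x^d * x := pow_succ x d
    nlinarith [pow_pos (show (0:ℝ) < x by linarith) d]
  have hpow : (x*(x^d*y-1))^(d-1) ≤ (y*(x^(d+1)-1))^(d-1) :=
    pow_le_pow_left₀ (by positivity) hxy _
  have e0 : x^d = x * x^(d-1) := by rw [← pow_succ']; congr 1; omega
  have e1 : (x-1)*T*x^d*(x^d*y-1)^(d-1) = (T*(x-1)*x) * ((x*(x^d*y-1))^(d-1)) := by
    rw [mul_pow]; rw [e0]; ring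
  have e2 : (T*(x-1)*x) * ((y*(x^(d+1)-1))^(d-1))
      = (x*y^(d-1)) * (T*((x^(d+1)-1)^(d-1)*(x-1))) := by
    rw [mul_pow]; ring
  calc (x-1)*T*x^d*(x^d*y-1)^(d-1)
      = (T*(x-1)*x) * ((x*(x^d*y-1))^(d-1)) := e1
    _ ≤ (T*(x-1)*x) * ((y*(x^(d+1)-1))^(d-1)) :=
        mul_le_mul_of_nonneg_left hpow (by positivity)
    _ = (x*y^(d-1)) * (T*((x^(d+1)-1)^(d-1)*(x-1))) := e2
    _ < (x*y^(d-1)) * ((x^d-1)^d) := by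
        apply mul_lt_mul_of_pos_left hg
        have hy0 : (0:ℝ) < y := by linarith
        positivity
    _ = x*y^(d-1)*(x^d-1)^d := by ring

lemma f1_anti {q k d : ℕ} (hd : 2 ≤ d) {x : ℝ} (hx : 1 < x)
    (hT : 0 < (q:ℝ)^k - q) (hgT : (q:ℝ)^k - q < gfun d x) :
    StrictAntiOn (fun y => f1 q k d x y) (Set.Ioc 1 x) := by
  intro y1 hy1 y2 hy2 hlt
  simp only []
  set T := (q:ℝ)^k - q with hTdef
  have hy11 : 1 < y1 := hy1.1
  have hy21 : 1 < y2 := hy2.1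
  have hy2x : y2 ≤ x := hy2.2
  have hx1 : (0:ℝ) < x - 1 := by linarith
  have hA : 0 < x^d - 1 := pow_sub_one_pos hx (by omega)
  have hAne : x^d - 1 ≠ 0 := ne_of_gt hA
  have hC1 : 0 < x^d*y1 - 1 := by nlinarith
  have hC2 : 0 < x^d*y2 - 1 := by nlinarith
  -- termwise inequality
  have hkey : ∀ i ∈ range d,
      (x-1)*T*x^d*((x^d*y2-1)^i*(x^d*y1-1)^(d-1-i))
        < (x*(x^d-1)^d)*(y2^i*y1^(d-1-i)) := by
    intro i hi
    have hi' : i ≤ d - 1 := by simp at hi; omega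
    have hstar := star hd hx hy21 hy2x hT hgT
    have hcy : (x^d*y1-1)*y2 < (x^d*y2-1)*y1 := by nlinarith
    have hcyp : ((x^d*y1-1)*y2)^(d-1-i) ≤ ((x^d*y2-1)*y1)^(d-1-i) :=
      pow_le_pow_left₀ (by positivity) (le_of_lt hcy) _
    have hy2pos : (0:ℝ) < y2^(d-1-i) := by positivity
    apply lt_of_mul_lt_mul_right _ (le_of_lt hy2pos)
    have split1 : (x^d*y2-1)^i * ((x^d*y2-1)*y1)^(d-1-i) = (x^d*y2-1)^(d-1) * y1^(d-1-i) := by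
      rw [mul_pow, ← mul_assoc, ← pow_add]; congr 2; omega
    have split2 : y2^i * y2^(d-1-i) = y2^(d-1) := by rw [← pow_add]; congr 1; omega
    calc (x-1)*T*x^d*((x^d*y2-1)^i*(x^d*y1-1)^(d-1-i)) * y2^(d-1-i)
        = ((x-1)*T*x^d) * ((x^d*y2-1)^i * (((x^d*y1-1)*y2)^(d-1-i))) := by
          rw [mul_pow]; ring
      _ ≤ ((x-1)*T*x^d) * ((x^d*y2-1)^i * (((x^d*y2-1)*y1)^(d-1-i))) := by
          apply mul_le_mul_of_nonneg_left _ (by positivity)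
          exact mul_le_mul_of_nonneg_left hcyp (by positivity)
      _ = ((x-1)*T*x^d*(x^d*y2-1)^(d-1)) * y1^(d-1-i) := by rw [split1]; ring
      _ < (x*y2^(d-1)*(x^d-1)^d) * y1^(d-1-i) := by
          apply mul_lt_mul_of_pos_right hstar (by positivity)
      _ = (x*(x^d-1)^d)*(y2^i*y1^(d-1-i)) * y2^(d-1-i) := by rw [← split2]; ring
  have hsum := Finset.sum_lt_sum_of_nonempty (nonempty_range_iff.mpr (by omega)) hkey
  rw [← Finset.mul_sum, ← Finset.mul_sum] at hsum
  -- geometric sum identities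
  have hgeo2 : (∑ i ∈ range d, (x^d*y2-1)^i*(x^d*y1-1)^(d-1-i)) * ((x^d*y2-1) - (x^d*y1-1))
      = (x^d*y2-1)^d - (x^d*y1-1)^d := geom_sum₂_mul _ _ d
  have hgeo1 : (∑ i ∈ range d, y2^i*y1^(d-1-i)) * (y2 - y1) = y2^d - y1^d := geom_sum₂_mul _ _ d
  have hdy : (0:ℝ) < y2 - y1 := by linarith
  have hmul := mul_lt_mul_of_pos_right hsum hdy
  have key : (x-1)*T*((x^d*y2-1)^d - (x^d*y1-1)^d) < x*(y2^d - y1^d)*(x^d-1)^d := by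
    rw [← hgeo2, ← hgeo1]
    nlinarith [hmul]
  -- conclude
  have hBform : ∀ y : ℝ, 1 + x^d*(y-1)/(x^d-1) = (x^d*y-1)/(x^d-1) := by
    intro y; field_simp; ring
  have hApow : (0:ℝ) < (x^d-1)^d := by positivity
  have expand : f1 q k d x y1 - f1 q k d x y2
      = (x*(y2^d - y1^d)*(x^d-1)^d - (x-1)*T*((x^d*y2-1)^d - (x^d*y1-1)^d))/(x^d-1)^d := by
    unfold f1
    rw [hBform y1, hBform y2, div_pow, div_pow, ← hTdef]
    field_simp
    ring
  have : 0 < f1 q k d x y1 - f1 q k d x y2 := by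
    rw [expand]
    apply div_pos _ hApow
    linarith
  linarith

/-- continuous version of h1 -/
noncomputable def Hfun (q k d : ℕ) (x : ℝ) : ℝ :=
  ((∑ i ∈ range (d+1), x^i) / (∑ i ∈ range d, x^i)) ^ d * ((q : ℝ) ^ k - q)
    - (∑ i ∈ range d, x^i) + (q : ℝ) - x ^ d

lemma h1_eq_H {q k d : ℕ} (hd : 1 ≤ d) {x : ℝ} (hx : 1 < x) : h1 q k d x = Hfun q k d x := by
  have hx1 : x - 1 ≠ 0 := by intro h; nlinarith
  have e1 : x^(d+1) - 1 = (∑ i ∈ range (d+1), x^i) * (x-1) := (geom_sum_mul x (d+1)).symm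
  have e2 : x^d - 1 = (∑ i ∈ range d, x^i) * (x-1) := (geom_sum_mul x d).symm
  have hs : 0 < ∑ i ∈ range d, x^i := by
    apply Finset.sum_pos (fun i _ => by positivity)
    exact nonempty_range_iff.mpr (by omega)
  unfold h1 Hfun
  rw [e1, e2]
  rw [mul_div_mul_right _ _ hx1, mul_div_cancel_right₀ _ hx1]

lemma Hfun_cont (q k d : ℕ) (hd : 1 ≤ d) : ContinuousAt (Hfun q k d) 1 := by
  have hs : (∑ i ∈ range d, (1:ℝ)^i) ≠ 0 := by
    simp only [one_pow, Finset.sum_const, card_range, nsmul_eq_mul, mul_one]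
    exact Nat.cast_ne_zero.mpr (by omega)
  apply ContinuousAt.sub
  apply ContinuousAt.add
  apply ContinuousAt.sub
  · apply ContinuousAt.mul _ continuousAt_const
    apply ContinuousAt.pow
    apply ContinuousAt.div
    · exact (continuous_finset_sum _ (fun i _ => continuous_pow i)).continuousAt
    · exact (continuous_finset_sum _ (fun i _ => continuous_pow i)).continuousAt
    · exact hs
  · exact (continuous_finset_sum _ (fun i _ => continuous_pow i)).continuousAt
  · exact continuousAt_const
  · exact (continuous_pow d).continuousAt

lemma Hfun_one_neg {q k d : ℕ} (hq : 4 ≤ q) (hk : 2 ≤ k) (hd : 3 * q ^ k ≤ d) :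
    Hfun q k d 1 < 0 := by
  have hd1 : (1:ℕ) ≤ d := by
    have : 0 < 3*q^k := by positivity
    omega
  have hd0 : (0:ℝ) < d := by exact_mod_cast lt_of_lt_of_le Nat.one_pos hd1
  have hsum1 : ∀ n : ℕ, (∑ i ∈ range n, (1:ℝ)^i) = n := by
    intro n; simp [one_pow]
  have hT : (0:ℝ) < (q:ℝ)^k - q := by
    have h1 : (q:ℝ)^k ≥ (q:ℝ)^2 := by
      apply pow_le_pow_right₀ (by exact_mod_cast le_trans (by norm_num) hq) hk
    have hq4 : (4:ℝ) ≤ q := by exact_mod_cast hq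
    nlinarith
  have hexp : (((d:ℝ)+1)/d)^d ≤ 3 := by
    have h1 : ((d:ℝ)+1)/d = 1 + 1/d := by field_simp
    have h2 : (1:ℝ) + 1/d ≤ Real.exp (1/d) := by
      have := Real.add_one_le_exp (1/(d:ℝ)); linarith
    have h3 : ((1:ℝ) + 1/d)^d ≤ (Real.exp (1/d))^d := by
      apply pow_le_pow_left₀ (by positivity) h2
    have h4 : (Real.exp (1/(d:ℝ)))^d = Real.exp 1 := by
      rw [← Real.exp_nat_mul]
      congr 1
      field_simp
    have h5 : Real.exp 1 < 3 := by
      have := Real.exp_one_lt_d9; norm_num at this ⊢; linarith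
    rw [h1]
    rw [h4] at h3
    linarith
  unfold Hfun
  rw [hsum1, hsum1]
  push_cast
  rw [one_pow]
  have hTd : (((d:ℝ)+1)/d)^d * ((q:ℝ)^k - q) ≤ 3 * ((q:ℝ)^k - q) :=
    mul_le_mul_of_nonneg_right hexp (le_of_lt hT)
  have hdge : (3:ℝ) * (q:ℝ)^k ≤ d := by exact_mod_cast hd
  have hq4 : (4:ℝ) ≤ q := by exact_mod_cast hq
  linarith

lemma h1_x0 {q k d : ℕ} (hd : 1 ≤ d) {x : ℝ} (hx : 1 < x) {T : ℝ} (hT : 0 < T)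
    (hg : gfun d x = T) : ((x ^ (d + 1) - 1) / (x ^ d - 1)) ^ d * T
    - (x ^ d - 1) / (x - 1) + (q : ℝ) - x ^ d = q := by
  have hx1 : x - 1 ≠ 0 := by intro h; nlinarith
  have hA : 0 < x^d - 1 := pow_sub_one_pos hx hd
  have hD1 : 0 < x^(d+1) - 1 := pow_sub_one_pos hx (by omega)
  have hDne : (x^(d+1)-1)^(d-1) * (x-1) ≠ 0 := by
    apply mul_ne_zero (ne_of_gt (pow_pos hD1 _)) hx1
  have hN : (x^d-1)^d = T * ((x^(d+1)-1)^(d-1)*(x-1)) := by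
    have := (div_eq_iff hDne).mp hg
    linarith [this]
  have e : ((x^(d+1)-1)/(x^d-1))^d * T = (x^(d+1)-1)/(x-1) := by
    rw [div_pow, hN]
    have hpow : (x^(d+1)-1)^d = (x^(d+1)-1)^(d-1) * (x^(d+1)-1) := by
      rw [← pow_succ]; congr 1; omega
    field_simp
    rw [hpow]; ring
  rw [e]
  have e2 : (x^(d+1)-1)/(x-1) - (x^d-1)/(x-1) = x^d := by
    rw [div_sub_div_same, show x^(d+1) - 1 - (x^d-1) = x^d*(x-1) by rw [pow_succ]; ring]
    exact mul_div_cancel_right₀ _ hx1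
  linarith [e2]

lemma h1_contAt {q k d : ℕ} (hd : 1 ≤ d) {x : ℝ} (hx : 1 < x) :
    ContinuousAt (h1 q k d) x := by
  have hA : x^d - 1 ≠ 0 := ne_of_gt (pow_sub_one_pos hx hd)
  have hx1 : x - 1 ≠ 0 := by intro h; nlinarith
  unfold h1
  apply ContinuousAt.sub
  apply ContinuousAt.add
  apply ContinuousAt.sub
  · apply ContinuousAt.mul _ continuousAt_const
    apply ContinuousAt.pow
    exact ContinuousAt.div (by fun_prop) (by fun_prop) hA
  · exact ContinuousAt.div (by fun_prop) (by fun_prop) hx1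
  · exact continuousAt_const
  · exact (continuous_pow d).continuousAt

lemma xstar_lt_x0 {q k d : ℕ} (hq : 4 ≤ q) (hk : 2 ≤ k) (hd : 3 * q ^ k ≤ d)
    {x0 : ℝ} (hx0 : 1 < x0) (hgx0 : gfun d x0 = (q : ℝ) ^ k - q)
    {xstar : ℝ} (hxs : 1 < xstar)
    (hmin : ∀ x : ℝ, 1 < x → h1 q k d x = 0 → xstar ≤ x) : xstar < x0 := by
  have hd1 : (1:ℕ) ≤ d := by
    have : 0 < 3*q^k := by positivity
    omega
  have hT : (0:ℝ) < (q:ℝ)^k - q := by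
    have h1 : (q:ℝ)^k ≥ (q:ℝ)^2 :=
      pow_le_pow_right₀ (by exact_mod_cast le_trans (by norm_num) hq) hk
    have hq4 : (4:ℝ) ≤ q := by exact_mod_cast hq
    nlinarith
  -- find x1 close to 1 with h1 x1 < 0
  have hev : ∀ᶠ x in nhds 1, Hfun q k d x < 0 :=
    (Hfun_cont q k d hd1).eventually_lt_const (Hfun_one_neg hq hk hd)
  rw [Metric.eventually_nhds_iff] at hev
  obtain ⟨ε, hε, hball⟩ := hev
  set x1 := min (1 + ε/2) ((1+x0)/2) with hx1def
  have hx11 : 1 < x1 := lt_min (by linarith) (by linarith)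
  have hx1x0 : x1 < x0 := lt_of_le_of_lt (min_le_right _ _) (by linarith)
  have hx1ball : dist x1 1 < ε := by
    rw [Real.dist_eq, abs_of_pos (by linarith)]
    have := min_le_left (1 + ε/2) ((1+x0)/2)
    rw [← hx1def] at this
    linarith
  have hHx1 : h1 q k d x1 < 0 := by
    rw [h1_eq_H hd1 hx11]
    exact hball hx1ball
  have hq0 : h1 q k d x0 = q := by
    unfold h1; exact h1_x0 (q:=q) (k:=k) hd1 hx0 hT hgx0
  have hcont : ContinuousOn (h1 q k d) (Set.Icc x1 x0) := by
    intro x hx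
    exact (h1_contAt hd1 (lt_of_lt_of_le hx11 hx.1)).continuousWithinAt
  have hmem : (0:ℝ) ∈ Set.Icc (h1 q k d x1) (h1 q k d x0) := by
    constructor
    · linarith
    · rw [hq0]; positivity
  obtain ⟨c, hc, hc0⟩ := intermediate_value_Icc (le_of_lt hx1x0) hcont hmem
  have hc1 : 1 < c := lt_of_lt_of_le hx11 hc.1
  have hcx0 : c < x0 := by
    rcases lt_or_eq_of_le hc.2 with h | h
    · exact h
    · exfalso
      rw [h, hq0] at hc0
      have : (4:ℝ) ≤ q := by exact_mod_cast hq
      linarith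
  exact lt_of_le_of_lt (hmin c hc1 hc0) hcx0
/-- Let `q ≥ 4`, `k ≥ 2`, `d ≥ 3q^k` be integers. If `x_0 ∈ (1, ∞)` solves
`g(x_0) = q^k − q` and `x*` is the smallest root of `h1` in `(1, ∞)`, then `x_0 > x*`, and
for every `1 < x < x_0` the function `y ↦ f1(x, y)` is strictly decreasing on `(1, x]`. -/
theorem stmt11 (q k d : ℕ) (hq : 4 ≤ q) (hk : 2 ≤ k) (hd : 3 * q ^ k ≤ d)
    (x0 : ℝ) (hx0 : 1 < x0) (hgx0 : gfun d x0 = (q : ℝ) ^ k - q)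
    (xstar : ℝ) (hxs : 1 < xstar) (hroot : h1 q k d xstar = 0)
    (hmin : ∀ x : ℝ, 1 < x → h1 q k d x = 0 → xstar ≤ x) :
    xstar < x0 ∧
    ∀ x : ℝ, 1 < x → x < x0 → StrictAntiOn (fun y => f1 q k d x y) (Set.Ioc 1 x) := by
  have hd2 : 2 ≤ d := by
    have h1 : 4^2 ≤ q^k := le_trans (Nat.pow_le_pow_right (by omega) hk)
      (Nat.pow_le_pow_left hq k)
    omega
  have hT : (0:ℝ) < (q:ℝ)^k - q := by
    have h1 : (q:ℝ)^k ≥ (q:ℝ)^2 :=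
      pow_le_pow_right₀ (by exact_mod_cast le_trans (by norm_num) hq) hk
    have hq4 : (4:ℝ) ≤ q := by exact_mod_cast hq
    nlinarith
  constructor
  · exact xstar_lt_x0 hq hk hd hx0 hgx0 hxs hmin
  · intro x hx1 hxx0
    have hgT : (q:ℝ)^k - q < gfun d x := by
      rw [← hgx0]
      exact gfun_anti hd2 (Set.mem_Ioi.mpr hx1)
        (Set.mem_Ioi.mpr (lt_trans hx1 hxx0)) hxx0
    exact f1_anti hd2 hx1 hT hgT
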